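/- Let λ ∈ 𝔥* and w ∈ W. Then there exists w′ ∈ W_λ such that Δ⁺ ∩ (w′w^{−1})^{−1}Δ⁻ ∩ wΔ_λ = ∅. -/

import Mathlib

noncomputable section

open Complex

namespace Paper

variable {V : Type} [AddCommGroup V] [Module ℂ V]

/-- Data of the root system `Δ` of a complex semisimple Lie algebra inside `𝔥* = V`,
together with the (Killing-form induced) symmetric nondegenerate bilinear form and
a fixed positive system `Pos = Δ⁺`. -/
structure RootDatum (V : Type) [AddCommGroup V] [Module ℂ V] : Type where
  /-- the bilinear form `⟨·,·⟩` on `𝔥*` induced by the Killing form -/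
  B : V →ₗ[ℂ] V →ₗ[ℂ] ℂ
  Bsymm : ∀ x y, B x y = B y x
  Bnondeg : ∀ x, (∀ y, B x y = 0) → x = 0
  /-- the set of roots -/
  Δ : Set V
  finite : Δ.Finite
  zero_not_mem : (0 : V) ∉ Δ
  root_self_ne : ∀ α ∈ Δ, B α α ≠ 0
  neg_mem : ∀ α ∈ Δ, -α ∈ Δ
  refl_mem : ∀ α ∈ Δ, ∀ β ∈ Δ, β - ((2 / B α α) * B α β) • α ∈ Δ
  pair_int : ∀ α ∈ Δ, ∀ β ∈ Δ, ∃ n : ℤ, (2 / B α α) * B α β = (n : ℂ)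
  /-- the positive system `Δ⁺` -/
  Pos : Set V
  pos_subset : Pos ⊆ Δ
  pos_total : ∀ α ∈ Δ, α ∈ Pos ∨ -α ∈ Pos
  pos_not_neg : ∀ α ∈ Pos, -α ∉ Pos
  pos_closed : ∀ α ∈ Pos, ∀ β ∈ Pos, α + β ∈ Δ → α + β ∈ Pos

namespace RootDatum

variable (rd : RootDatum V)

/-- `⟨α̌, μ⟩` where `α̌ = 2α/⟨α,α⟩`. -/
def pair (α μ : V) : ℂ := (2 / rd.B α α) * rd.B α μ

/-- The reflection `s_α` as a linear map:  `s_α(μ) = μ - ⟨α̌,μ⟩ α`. -/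
def sLin (α : V) : V →ₗ[ℂ] V :=
  LinearMap.id - (2 / rd.B α α) • ((LinearMap.toSpanSingleton ℂ V α).comp (rd.B α))

lemma sLin_apply (α μ : V) : rd.sLin α μ = μ - rd.pair α μ • α := by
  simp [sLin, pair, LinearMap.toSpanSingleton, sub_eq_add_neg, mul_smul]

lemma s_involutive (α : V) : Function.Involutive (rd.sLin α) := by
  intro μ
  rw [rd.sLin_apply, rd.sLin_apply]
  by_cases h : rd.B α α = 0
  · simp [pair, h]
  · have h1 : rd.pair α (μ - rd.pair α μ • α) = - rd.pair α μ := by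
      simp only [pair, map_sub, map_smul]
      field_simp
      ring_nf
      rw [mul_inv_cancel_right₀ h]
      ring
    rw [h1]
    module

/-- The reflection `s_α ∈ GL(𝔥*)`. -/
def s (α : V) : V ≃ₗ[ℂ] V :=
  LinearEquiv.ofInvolutive (rd.sLin α) (rd.s_involutive α)

lemma s_apply (α μ : V) : rd.s α μ = μ - rd.pair α μ • α := rd.sLin_apply α μ

/-- The Weyl group `W`, as the subgroup of `GL(𝔥*)` generated by the reflections. -/
def W : Subgroup (V ≃ₗ[ℂ] V) := Subgroup.closure {g | ∃ α ∈ rd.Δ, g = rd.s α}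

/-- `⟨α̌, μ⟩ ∈ ℤ` -/
def pairInt (α μ : V) : Prop := ∃ n : ℤ, rd.pair α μ = (n : ℂ)

/-- `⟨α̌, μ⟩ ∈ ℤ_{<0}` -/
def pairNegInt (α μ : V) : Prop := ∃ n : ℤ, n < 0 ∧ rd.pair α μ = (n : ℂ)

/-- the integral weight lattice `𝒫` -/
def P : Set V := {μ | ∀ α ∈ rd.Δ, rd.pairInt α μ}

/-- the integral root system `Δ_λ` -/
def Δint (lam : V) : Set V := {α ∈ rd.Δ | rd.pairInt α lam}

/-- the integral Weyl group `W_λ = {w ∈ W ∣ wλ - λ ∈ 𝒫}` (as a subset of `GL(𝔥*)`) -/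
def Wint (lam : V) : Set (V ≃ₗ[ℂ] V) := {w | w ∈ rd.W ∧ w lam - lam ∈ rd.P}

/-- `Δ_λ⁺ = Δ⁺ ∩ Δ_λ` -/
def PosInt (lam : V) : Set V := rd.Pos ∩ rd.Δint lam

/-- the simple roots `Π_λ` of `Δ_λ⁺`, i.e. the indecomposable positive roots -/
def SimpleInt (lam : V) : Set V :=
  {α ∈ rd.PosInt lam | ¬ ∃ β ∈ rd.PosInt lam, ∃ γ ∈ rd.PosInt lam, α = β + γ}

/-- `W_λ⁰ = {w ∈ W_λ ∣ wλ = λ}` -/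
def Wint0 (lam : V) : Set (V ≃ₗ[ℂ] V) := {w ∈ rd.Wint lam | w lam = lam}

/-- the length `ℓ_λ(w) = #(Δ_λ⁺ ∩ w⁻¹ Δ⁻)` of `w` as an element of `W_λ` -/
def lenInt (lam : V) (w : V ≃ₗ[ℂ] V) : ℕ :=
  Set.ncard {α | α ∈ rd.PosInt lam ∧ -(w α) ∈ rd.Pos}

/-- `w` is the longest element `w_λ` of `W_λ`:  `w ∈ W_λ` and `w(Δ_λ⁺) = Δ_λ⁻`. -/
def IsLongest (lam : V) (w : V ≃ₗ[ℂ] V) : Prop :=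
  w ∈ rd.Wint lam ∧ ∀ α ∈ rd.PosInt lam, -(w α) ∈ rd.PosInt lam

/-- `λ` is dominant: `⟨α̌,λ⟩ ∉ ℤ_{<0}` for all `α ∈ Δ⁺`. -/
def IsDominant (lam : V) : Prop := ∀ α ∈ rd.Pos, ¬ rd.pairNegInt α lam

/-- `(β_1, …, β_l)` with `β_i = s_{α_1} ⋯ s_{α_{i-1}} (α_i)`, for a sequence `(α_1, …, α_l)`. -/
def betaList : List V → List V
  | [] => []
  | α :: L => α :: (betaList L).map (rd.s α)

/-- `s_{γ_r} ⋯ s_{γ_1} μ` for a list `(γ_1, …, γ_r)`. -/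
def chainApply : List V → V → V
  | [], μ => μ
  | γ :: t, μ => chainApply t (rd.s γ μ)

/-- the condition `⟨γ̌_k, s_{γ_{k-1}} ⋯ s_{γ_1} μ⟩ ∈ ℤ_{<0}` for all `k`. -/
def chainCond : List V → V → Prop
  | [], _ => True
  | γ :: t, μ => rd.pairNegInt γ μ ∧ chainCond t (rd.s γ μ)

/-- The set `A_{(s_{α_1},…,s_{α_l})}(μ)` attached to the sequence `L = (α_1, …, α_l)`
of simple roots: all `μ' = s_{β_{i_r}} ⋯ s_{β_{i_1}} μ` where `1 ≤ i_1 < ⋯ < i_r ≤ l` and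
`⟨β̌_{i_k}, s_{β_{i_{k-1}}} ⋯ s_{β_{i_1}} μ⟩ ∈ ℤ_{<0}` for all `k = 1, …, r`. -/
def Aset (L : List V) (μ : V) : Set V :=
  {μ' | ∃ γs : List V, γs.Sublist (rd.betaList L) ∧ rd.chainCond γs μ ∧ μ' = rd.chainApply γs μ}

/-- `L = (α_1, …, α_l)` gives a reduced expression `w = s_{α_1} ⋯ s_{α_l}` of `w ∈ W_λ`
as a product of elements of `S_λ`. -/
def IsReducedWord (lam : V) (w : V ≃ₗ[ℂ] V) (L : List V) : Prop :=
  (∀ α ∈ L, α ∈ rd.SimpleInt lam) ∧ (L.map rd.s).prod = w ∧ L.length = rd.lenInt lam w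

/-- The set `W_λ⁰ w⁻¹ · S = {u w⁻¹ ν ∣ u ∈ W_λ⁰, ν ∈ S}`. -/
def orbitSet (lam : V) (w : V ≃ₗ[ℂ] V) (S : Set V) : Set V :=
  {x | ∃ u ∈ rd.Wint0 lam, ∃ ν ∈ S, x = u (w⁻¹ ν)}

end RootDatum

end Paper

/-!
Call `γ ∈ Δ_λ` an inversion of `v` (relative to `w`) if `wγ > 0` and `vγ < 0`; the theorem asks
for `w' ∈ W_λ` without inversions. If `γ` is an inversion of `v`, then `v s_γ ∈ W_λ` has strictly
fewer: `δ ↦ s_γ δ` (if `w s_γ δ > 0`) or `δ ↦ δ` (otherwise) injects its inversions into those of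
`v` other than `γ`. Checking this only needs that no nonempty sum of positive roots vanishes, which
in turn follows from: `⟨α̌, β⟩ < 0` for positive roots `α, β` forces `α + β ∈ Δ`. As the form is not
assumed to be positive on the roots, that last fact is extracted from the finiteness of `Δ`: for
linearly independent roots, `s_α s_β` has infinite order unless `0 ≤ ⟨α̌, β⟩⟨β̌, α⟩ < 4`.
-/

open Paper

/-- `chebU T (n + 1) = Uₙ(T / 2)`, with `Uₙ` the Chebyshev polynomials of the second kind. -/
def chebU (T : ℤ) : ℕ → ℤ
  | 0 => 0
  | 1 => 1
  | n + 2 => T * chebU T (n + 1) - chebU T n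

lemma abs_chebU_add_one_le (T : ℤ) (hT : 2 ≤ |T|) (n : ℕ) :
    |chebU T n| + 1 ≤ |chebU T (n + 1)| := by
  induction n with
  | zero => simp [chebU]
  | succ n ih =>
    calc |chebU T (n + 1)| + 1 ≤ 2 * |chebU T (n + 1)| - |chebU T n| := by linarith
      _ ≤ |T * chebU T (n + 1)| - |chebU T n| := by rw [abs_mul]; gcongr
      _ ≤ |chebU T (n + 2)| := by
        rw [chebU]; linarith [abs_sub_abs_le_abs_sub (T * chebU T (n + 1)) (chebU T n)]

lemma le_abs_chebU (T : ℤ) (hT : 2 ≤ |T|) (n : ℕ) : (n : ℤ) ≤ |chebU T n| := by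
  induction n with
  | zero => simp
  | succ n ih => push_cast; linarith [abs_chebU_add_one_le T hT n]

lemma iterate_succ_apply_eq_chebU {M : Type*} [AddCommGroup M] (f : M →+ M) (T : ℤ) {x : M}
    (hx : f (f x) = T • f x - x) (n : ℕ) :
    f^[n + 1] x = chebU T (n + 1) • f x - chebU T n • x := by
  induction n with
  | zero => simp [chebU]
  | succ n ih =>
    rw [Function.iterate_succ_apply', ih, map_sub, map_zsmul, map_zsmul, hx, chebU]
    module

lemma Set.MapsTo.exists_iterate_eq_self {α : Type*} {f : α → α} {s : Set α}
    (h : Set.MapsTo f s s) (hf : Set.InjOn f s) (hs : s.Finite) {x : α} (hx : x ∈ s) :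
    ∃ n > 0, f^[n] x = x := by
  have : Finite s := hs.to_subtype
  obtain ⟨n, hn, hper⟩ := Function.mem_periodicPts.mp
    ((h.restrict_inj.mpr hf).mem_periodicPts ⟨x, hx⟩)
  refine ⟨n, hn, ?_⟩
  have := congrArg Subtype.val hper.eq
  rwa [h.iterate_restrict, Set.MapsTo.val_restrict_apply] at this

namespace Paper.RootDatum

variable {V : Type} [AddCommGroup V] [Module ℂ V] (rd : RootDatum V)

lemma pair_add (a x y : V) : rd.pair a (x + y) = rd.pair a x + rd.pair a y := by
  simp [pair, mul_add]

lemma pair_sub (a x y : V) : rd.pair a (x - y) = rd.pair a x - rd.pair a y := by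
  simp [pair, mul_sub]

lemma pair_smul (a : V) (c : ℂ) (x : V) : rd.pair a (c • x) = c * rd.pair a x := by
  simp only [pair, map_smul, smul_eq_mul]; ring

lemma pair_self {a : V} (ha : a ∈ rd.Δ) : rd.pair a a = 2 := by
  have := rd.root_self_ne a ha
  rw [pair]; field_simp

lemma pair_eq_zero_comm {a b : V} (ha : a ∈ rd.Δ) (hb : b ∈ rd.Δ) :
    rd.pair a b = 0 ↔ rd.pair b a = 0 := by
  simp [pair, rd.Bsymm a b, rd.root_self_ne a ha, rd.root_self_ne b hb]

lemma pair_smul_self_mul_pair {a : V} (ha : a ∈ rd.Δ) {c : ℂ} (hc : c ≠ 0) :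
    rd.pair a (c • a) * rd.pair (c • a) a = 4 := by
  have := rd.root_self_ne a ha
  simp only [pair, map_smul, LinearMap.smul_apply, smul_eq_mul]
  field_simp
  ring

lemma s_s (a x : V) : rd.s a (rd.s a x) = x := rd.s_involutive a x

lemma s_self {a : V} (ha : a ∈ rd.Δ) : rd.s a a = -a := by
  rw [s_apply, rd.pair_self ha]; module

lemma s_inv (a : V) : (rd.s a)⁻¹ = rd.s a :=
  inv_eq_of_mul_eq_one_right (LinearEquiv.ext (rd.s_s a))

lemma B_s_s (a x y : V) : rd.B (rd.s a x) (rd.s a y) = rd.B x y := by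
  rcases eq_or_ne (rd.B a a) 0 with h | h
  · simp [s_apply, pair, h]
  · simp only [s_apply, pair, map_sub, map_smul, LinearMap.sub_apply, LinearMap.smul_apply,
      smul_eq_mul, rd.Bsymm x a]
    field_simp
    ring

lemma pair_s_s (a b x : V) : rd.pair (rd.s a b) (rd.s a x) = rd.pair b x := by
  simp only [pair, B_s_s]

lemma s_mem_Δ {a b : V} (ha : a ∈ rd.Δ) (hb : b ∈ rd.Δ) : rd.s a b ∈ rd.Δ := by
  simpa only [s_apply, pair] using rd.refl_mem a ha b hb

lemma s_mem_W {a : V} (ha : a ∈ rd.Δ) : rd.s a ∈ rd.W :=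
  Subgroup.subset_closure ⟨a, ha, rfl⟩

lemma mapsTo_of_mem_W {S : Set V} (hS : ∀ a ∈ rd.Δ, Set.MapsTo (rd.s a) S S)
    {g : V ≃ₗ[ℂ] V} (hg : g ∈ rd.W) : Set.MapsTo g S S := by
  induction hg using Subgroup.closure_induction_left with
  | one => exact Set.mapsTo_id S
  | mul_left x hx y _ ih =>
    obtain ⟨a, ha, rfl⟩ := hx
    exact (hS a ha).comp ih
  | inv_mul_cancel x hx y _ ih =>
    obtain ⟨a, ha, rfl⟩ := hx
    rw [s_inv]
    exact (hS a ha).comp ih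

lemma mapsTo_Δ_of_mem_W {g : V ≃ₗ[ℂ] V} (hg : g ∈ rd.W) : Set.MapsTo g rd.Δ rd.Δ :=
  rd.mapsTo_of_mem_W (fun _ ha _ hb => rd.s_mem_Δ ha hb) hg

lemma s_mem_P {a μ : V} (ha : a ∈ rd.Δ) (hμ : μ ∈ rd.P) : rd.s a μ ∈ rd.P := by
  intro b hb
  obtain ⟨k, hk⟩ := hμ b hb
  obtain ⟨n, hn⟩ := hμ a ha
  obtain ⟨j, hj⟩ : rd.pairInt b a := rd.pair_int b hb a ha
  refine ⟨k - n * j, ?_⟩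
  rw [s_apply, pair_sub, pair_smul, hk, hn, hj]
  push_cast; ring

lemma mapsTo_P_of_mem_W {g : V ≃ₗ[ℂ] V} (hg : g ∈ rd.W) : Set.MapsTo g rd.P rd.P :=
  rd.mapsTo_of_mem_W (fun _ ha _ hμ => rd.s_mem_P ha hμ) hg

lemma add_mem_P {x y : V} (hx : x ∈ rd.P) (hy : y ∈ rd.P) : x + y ∈ rd.P := by
  intro a ha
  obtain ⟨n, hn⟩ := hx a ha
  obtain ⟨k, hk⟩ := hy a ha
  exact ⟨n + k, by rw [pair_add, hn, hk]; push_cast; ring⟩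

lemma one_mem_Wint (lam : V) : (1 : V ≃ₗ[ℂ] V) ∈ rd.Wint lam :=
  ⟨one_mem _, fun _ _ => ⟨0, by simp [pair]⟩⟩

lemma mul_mem_Wint {lam : V} {u v : V ≃ₗ[ℂ] V} (hu : u ∈ rd.Wint lam) (hv : v ∈ rd.Wint lam) :
    u * v ∈ rd.Wint lam := by
  refine ⟨mul_mem hu.1 hv.1, ?_⟩
  have : (u * v) lam - lam = u (v lam - lam) + (u lam - lam) := by
    rw [map_sub]; exact (sub_add_sub_cancel _ _ _).symm
  rw [this]
  exact rd.add_mem_P (rd.mapsTo_P_of_mem_W hu.1 hv.2) hu.2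

lemma s_mem_Wint {lam γ : V} (hγ : γ ∈ rd.Δint lam) : rd.s γ ∈ rd.Wint lam := by
  refine ⟨rd.s_mem_W hγ.1, fun a ha => ?_⟩
  obtain ⟨n, hn⟩ := hγ.2
  obtain ⟨k, hk⟩ : rd.pairInt a γ := rd.pair_int a ha γ hγ.1
  refine ⟨-(n * k), ?_⟩
  rw [s_apply, sub_sub_cancel_left, ← neg_smul, pair_smul, hn, hk]
  push_cast; ring

lemma s_mem_Δint {lam γ δ : V} (hγ : γ ∈ rd.Δint lam) (hδ : δ ∈ rd.Δint lam) :
    rd.s γ δ ∈ rd.Δint lam := by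
  refine ⟨rd.s_mem_Δ hγ.1 hδ.1, ?_⟩
  obtain ⟨n, hn⟩ := hδ.2
  obtain ⟨k, hk⟩ := hγ.2
  obtain ⟨j, hj⟩ : rd.pairInt δ γ := rd.pair_int δ hδ.1 γ hγ.1
  refine ⟨n - k * j, ?_⟩
  rw [← rd.s_s γ lam, pair_s_s, s_apply, pair_sub, pair_smul, hn, hk, hj]
  push_cast; ring

/-- On the span of `a` and `b`, `g = s_a s_b` has determinant `1` and trace `T = mq - 2`, so
`g² = T g - 1` there; if `|T| ≥ 2` the coefficients of `gⁿ b` grow without bound, which is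
impossible since `b` has a finite `g`-orbit in `Δ`. -/
lemma pair_mul_pair_mem_Ico {a b : V} (ha : a ∈ rd.Δ) (hb : b ∈ rd.Δ)
    (hab : LinearIndependent ℂ ![a, b]) {m q : ℤ} (hm : rd.pair a b = m) (hq : rd.pair b a = q) :
    m * q ∈ Set.Ico 0 4 := by
  by_contra hmq
  have hT : 2 ≤ |m * q - 2| := by
    rw [Set.mem_Ico] at hmq
    rw [le_abs]
    omega
  have hm0 : m ≠ 0 := by rintro rfl; simp at hmq
  set g := rd.s a * rd.s b
  have hga : g a = ((m * q - 1 : ℤ) : ℂ) • a - (q : ℂ) • b := by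
    change rd.s a (rd.s b a) = _
    rw [rd.s_apply b a, hq, map_sub, map_smul, rd.s_self ha, s_apply, hm]
    push_cast; module
  have hgb : g b = (m : ℂ) • a - b := by
    change rd.s a (rd.s b b) = _
    rw [rd.s_self hb, map_neg, s_apply, hm]
    module
  have hggb : g (g b) = (m * q - 2) • g b - b := by
    rw [← Int.cast_smul_eq_zsmul ℂ, hgb, map_sub, map_smul, hga, hgb]
    push_cast; module
  obtain ⟨N, hN, hNb⟩ : ∃ N > 0, (⇑g)^[N] b = b :=
    (rd.mapsTo_Δ_of_mem_W (mul_mem (rd.s_mem_W ha) (rd.s_mem_W hb))).exists_iterate_eq_self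
      g.injective.injOn rd.finite hb
  obtain ⟨n, rfl⟩ := Nat.exists_eq_succ_of_ne_zero hN.ne'
  have hper := iterate_succ_apply_eq_chebU (g : V →+ V) _ hggb n
  set U := chebU (m * q - 2)
  have hU : U (n + 1) * m = 0 := by
    have hcomb : ((U (n + 1) * m : ℤ) : ℂ) • a + ((-(1 + U n + U (n + 1)) : ℤ) : ℂ) • b = 0 := by
      change (⇑g)^[n + 1] b = U (n + 1) • g b - U n • b at hper
      rw [hNb, hgb, ← Int.cast_smul_eq_zsmul ℂ, ← Int.cast_smul_eq_zsmul ℂ] at hper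
      push_cast
      linear_combination (norm := module) -hper
    exact_mod_cast (LinearIndependent.pair_iff.mp hab _ _ hcomb).1
  have hU0 : U (n + 1) = 0 := (mul_eq_zero.mp hU).resolve_right hm0
  have hgrowth : ((n + 1 : ℕ) : ℤ) ≤ |U (n + 1)| := le_abs_chebU _ hT _
  rw [hU0, abs_zero] at hgrowth
  omega

lemma add_mem_Pos_of_pair_neg {a b : V} (ha : a ∈ rd.Pos) (hb : b ∈ rd.Pos) {m : ℤ}
    (hm0 : m < 0) (hm : rd.pair a b = m) : a + b ∈ rd.Pos := by
  have haΔ := rd.pos_subset ha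
  have hbΔ := rd.pos_subset hb
  refine rd.pos_closed a ha b hb ?_
  obtain ⟨q, hq⟩ : rd.pairInt b a := rd.pair_int b hbΔ a haΔ
  by_cases hm1 : m = -1
  · have := rd.s_mem_Δ haΔ hbΔ
    rwa [s_apply, hm, hm1, Int.cast_neg, Int.cast_one, neg_smul, one_smul, sub_neg_eq_add,
      add_comm] at this
  by_cases hq1 : q = -1
  · have := rd.s_mem_Δ hbΔ haΔ
    rwa [s_apply, hq, hq1, Int.cast_neg, Int.cast_one, neg_smul, one_smul, sub_neg_eq_add] at this
  exfalso
  have hq0 : q ≠ 0 := by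
    rintro rfl
    have := (rd.pair_eq_zero_comm haΔ hbΔ).mpr (by exact_mod_cast hq)
    rw [hm] at this
    exact hm0.ne (by exact_mod_cast this)
  have hm_le : m ≤ -2 := by omega
  have hq_cases : q ≤ -2 ∨ 1 ≤ q := by omega
  by_cases hab : LinearIndependent ℂ ![a, b]
  · have hmq := rd.pair_mul_pair_mem_Ico haΔ hbΔ hab hm hq
    rw [Set.mem_Ico] at hmq
    rcases hq_cases with hq' | hq' <;> nlinarith
  obtain ⟨c, rfl⟩ : ∃ c : ℂ, c • a = b := by
    simpa [LinearIndependent.pair_iff' (fun h => rd.zero_not_mem (h ▸ haΔ))] using hab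
  have hc : c ≠ 0 := by rintro rfl; exact rd.zero_not_mem (by simpa using hbΔ)
  have hmq : m * q = 4 := by
    have := rd.pair_smul_self_mul_pair haΔ hc
    rw [hm, hq] at this
    exact_mod_cast this
  have hm_eq : m = -2 := by
    rcases hq_cases with hq' | hq'
    · nlinarith [mul_nonneg (by omega : (0 : ℤ) ≤ -2 - m) (by omega : (0 : ℤ) ≤ -2 - q)]
    · nlinarith
  have hc1 : c = -1 := by
    have := hm
    rw [pair_smul, rd.pair_self haΔ, hm_eq] at this
    push_cast at this
    linear_combination this / 2
  rw [hc1, neg_one_smul] at hb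
  exact rd.pos_not_neg a ha hb

lemma pair_list_sum (a : V) (l : List V) : rd.pair a l.sum = (l.map (rd.pair a)).sum := by
  induction l with
  | nil => simp [pair]
  | cons x t ih => rw [List.sum_cons, pair_add, ih, List.map_cons, List.sum_cons]

lemma exists_mem_pair_neg_of_pair_sum {a : V} (ha : a ∈ rd.Δ) {t : List V}
    (ht : ∀ x ∈ t, x ∈ rd.Δ) (hsum : (rd.pair a t.sum).re < 0) :
    ∃ b ∈ t, ∃ m : ℤ, m < 0 ∧ rd.pair a b = m := by
  by_contra! h
  have hnonneg : 0 ≤ (t.map fun x => (rd.pair a x).re).sum := by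
    refine List.sum_nonneg fun r hr => ?_
    obtain ⟨x, hx, rfl⟩ := List.mem_map.mp hr
    obtain ⟨k, hk⟩ : rd.pairInt a x := rd.pair_int a ha x (ht x hx)
    have : 0 ≤ k := by by_contra hk0; exact h x hx k (by omega) hk
    simpa [hk] using this
  have hre : (rd.pair a t.sum).re = (t.map fun x => (rd.pair a x).re).sum := by
    have := map_list_sum Complex.reAddGroupHom (t.map (rd.pair a))
    simp only [Complex.coe_reAddGroupHom, List.map_map, Function.comp_def] at this
    rw [← this, pair_list_sum]
  linarith

theorem list_sum_ne_zero_of_forall_mem_Pos :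
    ∀ l : List V, l ≠ [] → (∀ x ∈ l, x ∈ rd.Pos) → l.sum ≠ 0
  | a :: t, _, hpos => by
    classical
    intro hsum
    have ha := hpos a List.mem_cons_self
    have ht : ∀ x ∈ t, x ∈ rd.Pos := fun x hx => hpos x (List.mem_cons_of_mem a hx)
    have haΔ := rd.pos_subset ha
    obtain ⟨b, hbt, m, hm0, hm⟩ : ∃ b ∈ t, ∃ m : ℤ, m < 0 ∧ rd.pair a b = m := by
      refine rd.exists_mem_pair_neg_of_pair_sum haΔ (fun x hx => rd.pos_subset (ht x hx)) ?_
      have := congrArg (rd.pair a) hsum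
      rw [List.sum_cons, pair_add, rd.pair_self haΔ, show rd.pair a 0 = 0 by simp [pair]] at this
      rw [show rd.pair a t.sum = -2 by linear_combination this]
      norm_num
    refine list_sum_ne_zero_of_forall_mem_Pos ((a + b) :: t.erase b) (List.cons_ne_nil _ _) ?_ ?_
    · intro x hx
      rcases List.mem_cons.mp hx with rfl | hx
      · exact rd.add_mem_Pos_of_pair_neg ha (ht b hbt) hm0 hm
      · exact ht x (List.mem_of_mem_erase hx)
    · rw [List.sum_cons, ← hsum, List.sum_cons, (List.perm_cons_erase hbt).sum_eq, List.sum_cons,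
        add_assoc]
termination_by l => l.length
decreasing_by classical simp [List.length_erase_of_mem hbt, List.length_pos_of_mem hbt]

lemma add_add_smul_ne_zero {x y z : V} (hx : x ∈ rd.Pos) (hy : y ∈ rd.Pos) (hz : z ∈ rd.Pos)
    {k : ℤ} (hk : 0 ≤ k) : x + y + (k : ℂ) • z ≠ 0 := by
  lift k to ℕ using hk
  have := rd.list_sum_ne_zero_of_forall_mem_Pos (x :: y :: List.replicate k z)
    (List.cons_ne_nil _ _) (by
      intro w hw
      simp only [List.mem_cons, List.mem_replicate] at hw
      rcases hw with rfl | rfl | ⟨-, rfl⟩ <;> assumption)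
  simpa [List.sum_replicate, add_assoc, Nat.cast_smul_eq_nsmul] using this

def inversionSet (lam : V) (u v : V ≃ₗ[ℂ] V) : Set V :=
  {γ | γ ∈ rd.Δint lam ∧ u γ ∈ rd.Pos ∧ -(v γ) ∈ rd.Pos}

variable {rd} {lam γ δ : V} {u v : V ≃ₗ[ℂ] V}

lemma inversionSet_finite : (rd.inversionSet lam u v).Finite :=
  rd.finite.subset fun _ hγ => hγ.1.1

lemma s_apply_mem_inversionSet_sdiff (hγ : γ ∈ rd.inversionSet lam u v)
    (hδ : δ ∈ rd.inversionSet lam u (v * rd.s γ)) (hsδ : u (rd.s γ δ) ∈ rd.Pos) :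
    rd.s γ δ ∈ rd.inversionSet lam u v \ {γ} := by
  refine Set.mem_sdiff_singleton.mpr ⟨⟨rd.s_mem_Δint hγ.1 hδ.1, hsδ, hδ.2.2⟩, fun h => ?_⟩
  have hδγ : δ = -γ := by rw [← rd.s_s γ δ, h, rd.s_self hγ.1.1]
  have := hδ.2.1
  rw [hδγ, map_neg] at this
  exact rd.pos_not_neg _ hγ.2.1 this

lemma mem_inversionSet_sdiff_of_mul_s (hu : Set.MapsTo u rd.Δ rd.Δ)
    (hv : Set.MapsTo v rd.Δ rd.Δ) (hγ : γ ∈ rd.inversionSet lam u v)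
    (hδ : δ ∈ rd.inversionSet lam u (v * rd.s γ)) (hsδ : u (rd.s γ δ) ∉ rd.Pos) :
    δ ∈ rd.inversionSet lam u v \ {γ} := by
  obtain ⟨hγint, hγu, hγv⟩ := hγ
  obtain ⟨hδint, hδu, hδv⟩ := hδ
  obtain ⟨m, hm⟩ : rd.pairInt γ δ := rd.pair_int γ hγint.1 δ hδint.1
  have hs : ∀ f : V ≃ₗ[ℂ] V, f (rd.s γ δ) = f δ - (m : ℂ) • f γ := fun f => by
    rw [s_apply, hm, map_sub, map_smul]
  have husδ : -(u (rd.s γ δ)) ∈ rd.Pos :=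
    (rd.pos_total _ (hu (rd.s_mem_Δ hγint.1 hδint.1))).resolve_left hsδ
  have hm_pos : 0 < m := by
    by_contra! hm0
    refine rd.add_add_smul_ne_zero hδu husδ hγu (k := -m) (by omega) ?_
    rw [hs]; push_cast; module
  have hvδ : -(v δ) ∈ rd.Pos := by
    refine (rd.pos_total _ (hv hδint.1)).resolve_left fun hvδ => ?_
    refine rd.add_add_smul_ne_zero hvδ hδv hγv hm_pos.le ?_
    change v δ + -(v (rd.s γ δ)) + (m : ℂ) • -(v γ) = 0
    rw [hs]; module
  refine Set.mem_sdiff_singleton.mpr ⟨⟨hδint, hδu, hvδ⟩, ?_⟩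
  rintro rfl
  change -(v (rd.s δ δ)) ∈ rd.Pos at hδv
  rw [rd.s_self hδint.1, map_neg, neg_neg] at hδv
  exact rd.pos_not_neg _ hδv hγv

lemma ncard_inversionSet_mul_s_lt (hu : Set.MapsTo u rd.Δ rd.Δ) (hv : Set.MapsTo v rd.Δ rd.Δ)
    (hγ : γ ∈ rd.inversionSet lam u v) :
    (rd.inversionSet lam u (v * rd.s γ)).ncard < (rd.inversionSet lam u v).ncard := by
  classical
  let f : V → V := fun δ => if u (rd.s γ δ) ∈ rd.Pos then rd.s γ δ else δ
  have hf : ∀ δ ∈ rd.inversionSet lam u (v * rd.s γ), f δ ∈ rd.inversionSet lam u v \ {γ} := by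
    intro δ hδ
    by_cases hsδ : u (rd.s γ δ) ∈ rd.Pos
    · simpa only [f, if_pos hsδ] using s_apply_mem_inversionSet_sdiff hγ hδ hsδ
    · simpa only [f, if_neg hsδ] using mem_inversionSet_sdiff_of_mul_s hu hv hγ hδ hsδ
  have hinj : Set.InjOn f (rd.inversionSet lam u (v * rd.s γ)) := by
    intro δ₁ h₁ δ₂ h₂ heq
    by_cases c₁ : u (rd.s γ δ₁) ∈ rd.Pos <;> by_cases c₂ : u (rd.s γ δ₂) ∈ rd.Pos <;>
      simp only [f, c₁, c₂, if_true, if_false] at heq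
    · exact (rd.s γ).injective heq
    · rw [← heq, rd.s_s] at c₂
      exact absurd h₁.2.1 c₂
    · rw [heq, rd.s_s] at c₁
      exact absurd h₂.2.1 c₁
    · exact heq
  calc (rd.inversionSet lam u (v * rd.s γ)).ncard
      ≤ (rd.inversionSet lam u v \ {γ}).ncard :=
        Set.ncard_le_ncard_of_injOn f hf hinj (inversionSet_finite.subset Set.sdiff_subset)
    _ < (rd.inversionSet lam u v).ncard :=
        Set.ncard_sdiff_singleton_lt_of_mem hγ inversionSet_finite

variable (rd lam)

theorem exists_mem_Wint_inversionSet_eq_empty (hu : Set.MapsTo u rd.Δ rd.Δ) :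
    ∃ v ∈ rd.Wint lam, rd.inversionSet lam u v = ∅ := by
  classical
  have hex : ∃ n, ∃ v ∈ rd.Wint lam, (rd.inversionSet lam u v).ncard = n :=
    ⟨_, 1, rd.one_mem_Wint lam, rfl⟩
  obtain ⟨v, hv, hv_min⟩ := Nat.find_spec hex
  refine ⟨v, hv, Set.eq_empty_iff_forall_notMem.mpr fun γ hγ => ?_⟩
  have hlt := ncard_inversionSet_mul_s_lt hu (rd.mapsTo_Δ_of_mem_W hv.1) hγ
  rw [hv_min] at hlt
  exact Nat.find_min hex hlt ⟨_, rd.mul_mem_Wint hv (rd.s_mem_Wint hγ.1), rfl⟩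

end Paper.RootDatum

/-- Lemma 3.2 (1). For every `λ ∈ 𝔥*` and `w ∈ W` there is `w' ∈ W_λ`
with `Δ⁺ ∩ (w'w⁻¹)⁻¹ Δ⁻ ∩ w Δ_λ = ∅`. -/
theorem statement9 {V : Type} [AddCommGroup V] [Module ℂ V] (rd : RootDatum V)
    (lam : V) (w : V ≃ₗ[ℂ] V) (hw : w ∈ rd.W) :
    ∃ w' ∈ rd.Wint lam,
      rd.Pos ∩ (⇑((w' * w⁻¹)⁻¹) '' {α | -α ∈ rd.Pos}) ∩ (⇑w '' rd.Δint lam) = ∅ := by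
  obtain ⟨w', hw', hempty⟩ :=
    rd.exists_mem_Wint_inversionSet_eq_empty lam (rd.mapsTo_Δ_of_mem_W hw)
  refine ⟨w', hw', Set.eq_empty_iff_forall_notMem.mpr ?_⟩
  rintro _ ⟨⟨hpos, α, hα, hαγ⟩, γ, hγ, rfl⟩
  have hw'γ : w' γ = α := by
    simpa [LinearEquiv.mul_apply] using (congrArg (w' * w⁻¹) hαγ).symm
  exact hempty.subset ⟨hγ, hpos, hw'γ ▸ hα⟩
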